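/- arXiv:2305.18982 — 5 statements merged into one kernel-verified Lean document; each statement's English description precedes it below -/
import Mathlib

section
/- Let H be an infinite-dimensional complex Hilbert space, n ≥ 2 an integer, and φ : P_n(H) → P_n(H) a map such that for every pair U, V ∈ P_n(H): U ⊥ V if and only if φ(U) ⊥ φ(V), and U ∩ V = {0} if and only if φ(U) ∩ φ(V) = {0}. Then for every pair U, V ∈ P_n(H), U # V implies φ(U) # φ(V). -/
/-- Two subspaces are orthogonal if every vector of one is orthogonal to every vector
of the other. -/
def SubPerp {H : Type*} [NormedAddCommGroup H] [InnerProductSpace ℂ H]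
    (U V : Submodule ℂ H) : Prop :=
  ∀ x ∈ U, ∀ y ∈ V, (inner ℂ x y : ℂ) = 0

/-- `U # V` (`U` and `V` are 1-orthogonal): `dim (U ∩ V) = 1` and the orthogonal
complement of `U ∩ V` within `U` is orthogonal to the orthogonal complement of `U ∩ V`
within `V`. -/
def OneOrth {H : Type*} [NormedAddCommGroup H] [InnerProductSpace ℂ H]
    (U V : Submodule ℂ H) : Prop :=
  Module.finrank ℂ (U ⊓ V : Submodule ℂ H) = 1 ∧
  ∀ x ∈ U, ∀ y ∈ V,
    (∀ z ∈ U ⊓ V, (inner ℂ x z : ℂ) = 0) → (∀ z ∈ U ⊓ V, (inner ℂ y z : ℂ) = 0) →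
    (inner ℂ x y : ℂ) = 0

/-!
For `n`-dimensional `U` and `V` in an infinite-dimensional `H`, `U # V` can be expressed through
orthogonality and trivial intersection alone: it holds iff `U ⊓ V ≠ ⊥` and there are `n - 1` pairwise orthogonal
`n`-dimensional subspaces `Zᵢ`, each orthogonal to `U` and meeting `V` nontrivially. Such `Zᵢ`
yield `n - 1` orthogonal vectors in `Uᗮ ⊓ V`, which forces `dim (U ⊓ V) = 1` and
`(U ⊓ V)ᗮ ⊓ V = Uᗮ ⊓ V`. Conversely, if `U # V`, take `Zᵢ = ℂ bᵢ ⊕ Fᵢ`, where `(bᵢ)` is an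
orthonormal basis of `(U ⊓ V)ᗮ ⊓ V` and the `Fᵢ` are pairwise orthogonal `(n - 1)`-dimensional
subspaces of `(U ⊔ V)ᗮ`; these exist because `H` is infinite-dimensional. Since `φ` preserves
both relations in both directions, it maps such a family for `U, V` to one for `φ U, φ V`.
-/

open Module Submodule
open scoped InnerProductSpace

section InnerProductSpace

variable {𝕜 E : Type*} [RCLike 𝕜] [NormedAddCommGroup E] [InnerProductSpace 𝕜 E]

theorem exists_orthonormal_of_not_finiteDimensional (hE : ¬FiniteDimensional 𝕜 E)
    (ι : Type*) [Finite ι] : ∃ f : ι → E, Orthonormal 𝕜 f := by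
  have hrank : (Nat.card ι : Cardinal) ≤ Module.rank 𝕜 E :=
    Cardinal.natCast_lt_aleph0.le.trans (not_lt.1 (mt rank_lt_aleph0_iff.1 hE))
  obtain ⟨v, hv⟩ := exists_linearIndependent_of_le_rank hrank
  exact ⟨_, (InnerProductSpace.gramSchmidtNormed_orthonormal hv).comp _
    (Finite.equivFin ι).injective⟩

theorem Submodule.not_finiteDimensional_orthogonal (K : Submodule 𝕜 E) [FiniteDimensional 𝕜 K]
    (hE : ¬FiniteDimensional 𝕜 E) : ¬FiniteDimensional 𝕜 Kᗮ := by
  intro hK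
  have htop : FiniteDimensional 𝕜 ↥(K ⊔ Kᗮ) := inferInstance
  rw [sup_orthogonal_of_hasOrthogonalProjection] at htop
  exact hE (Module.finite_def.2 (Module.Finite.iff_fg.1 htop))

theorem Submodule.exists_pairwise_isOrtho_le (K : Submodule 𝕜 E) (hK : ¬FiniteDimensional 𝕜 K)
    (ι : Type*) [Finite ι] (k : ℕ) :
    ∃ F : ι → Submodule 𝕜 E,
      (∀ i, FiniteDimensional 𝕜 (F i)) ∧ (∀ i, finrank 𝕜 (F i) = k) ∧ (∀ i, F i ≤ K) ∧
        Pairwise fun i j => F i ⟂ F j := by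
  obtain ⟨f, hf⟩ := exists_orthonormal_of_not_finiteDimensional hK (ι × Fin k)
  set g : ι × Fin k → E := fun p => f p
  have hg : Orthonormal 𝕜 g := hf.comp_linearIsometry K.subtypeₗᵢ
  refine ⟨fun i => span 𝕜 (Set.range (g ∘ Prod.mk i)),
    fun i => FiniteDimensional.span_of_finite 𝕜 (Set.finite_range _), fun i => ?_, fun i => ?_,
    fun i j hij => ?_⟩
  · rw [finrank_span_eq_card (hg.comp _ (Prod.mk_right_injective i)).linearIndependent,
      Fintype.card_fin]
  · exact span_le.2 (Set.range_subset_iff.2 fun a => (f (i, a)).2)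
  · refine isOrtho_span.2 ?_
    rintro _ ⟨a, rfl⟩ _ ⟨b, rfl⟩
    exact hg.2 (by simp [hij])

theorem Submodule.card_le_finrank_of_pairwise_inner_eq_zero {W : Submodule 𝕜 E}
    [FiniteDimensional 𝕜 W] {ι : Type*} [Fintype ι] {v : ι → E} (hv0 : ∀ i, v i ≠ 0)
    (hv : Pairwise fun i j => ⟪v i, v j⟫_𝕜 = 0) (hvW : ∀ i, v i ∈ W) :
    Fintype.card ι ≤ finrank 𝕜 W :=
  finrank_span_eq_card (linearIndependent_of_ne_zero_of_inner_eq_zero hv0 hv) ▸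
    finrank_mono (span_le.2 (Set.range_subset_iff.2 hvW))

theorem Submodule.IsOrtho.finrank_sup {K₁ K₂ : Submodule 𝕜 E} [FiniteDimensional 𝕜 K₁]
    [FiniteDimensional 𝕜 K₂] (h : K₁ ⟂ K₂) :
    finrank 𝕜 ↥(K₁ ⊔ K₂) = finrank 𝕜 K₁ + finrank 𝕜 K₂ := by
  rw [← finrank_sup_add_finrank_inf_eq, h.disjoint.eq_bot, finrank_bot, add_zero]

end InnerProductSpace

section OneOrth

variable {H : Type*} [NormedAddCommGroup H] [InnerProductSpace ℂ H]

theorem subPerp_iff_isOrtho {U V : Submodule ℂ H} : SubPerp U V ↔ U ⟂ V :=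
  isOrtho_iff_inner_eq.symm

theorem oneOrth_iff_isOrtho {U V : Submodule ℂ H} :
    OneOrth U V ↔ finrank ℂ ↥(U ⊓ V) = 1 ∧ (U ⊓ V)ᗮ ⊓ U ⟂ (U ⊓ V)ᗮ ⊓ V := by
  simp only [OneOrth, isOrtho_iff_inner_eq, mem_inf, mem_orthogonal']
  grind

theorem OneOrth.inf_ne_bot {U V : Submodule ℂ H} (h : OneOrth U V) : U ⊓ V ≠ ⊥ := by
  intro hUV
  have := h.1
  rw [hUV, finrank_bot] at this
  exact zero_ne_one this

theorem oneOrth_iff {U V : Submodule ℂ H} [(U ⊓ V).HasOrthogonalProjection] :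
    OneOrth U V ↔ finrank ℂ ↥(U ⊓ V) = 1 ∧ (U ⊓ V)ᗮ ⊓ V ≤ Uᗮ := by
  set D := U ⊓ V
  have hU : D ⊔ Dᗮ ⊓ U = U := sup_orthogonal_inf_of_hasOrthogonalProjection inf_le_left
  have hD : D ⟂ Dᗮ ⊓ V := (isOrtho_orthogonal_right D).mono_right inf_le_left
  have hle : Dᗮ ⊓ V ≤ Uᗮ ↔ Dᗮ ⊓ U ⟂ Dᗮ ⊓ V := by
    rw [← isOrtho_iff_le, isOrtho_comm]
    nth_rw 1 [← hU]
    rw [isOrtho_sup_left, and_iff_right hD]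
  rw [oneOrth_iff_isOrtho, hle]

structure IsOneOrthWitness (U V : Submodule ℂ H) {ι : Type*} (Z : ι → Submodule ℂ H) :
    Prop where
  isOrtho_left : ∀ i, Z i ⟂ U
  inf_ne_bot : ∀ i, Z i ⊓ V ≠ ⊥
  pairwise_isOrtho : Pairwise fun i j => Z i ⟂ Z j

theorem IsOneOrthWitness.card_le_finrank {U V : Submodule ℂ H} [FiniteDimensional ℂ V]
    {ι : Type*} [Fintype ι] {Z : ι → Submodule ℂ H} (hZ : IsOneOrthWitness U V Z) :
    Fintype.card ι ≤ finrank ℂ ↥(Uᗮ ⊓ V) := by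
  choose v hv hv0 using fun i => (Submodule.ne_bot_iff _).1 (hZ.inf_ne_bot i)
  refine card_le_finrank_of_pairwise_inner_eq_zero hv0
    (fun i j hij => (hZ.pairwise_isOrtho hij).inner_eq (hv i).1 (hv j).1) fun i => ⟨?_, (hv i).2⟩
  exact isOrtho_iff_le.1 (hZ.isOrtho_left i) (hv i).1

theorem oneOrth_of_isOneOrthWitness {U V : Submodule ℂ H} [FiniteDimensional ℂ V] {ι : Type*}
    [Fintype ι] {Z : ι → Submodule ℂ H} (hZ : IsOneOrthWitness U V Z) (hUV : U ⊓ V ≠ ⊥)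
    (hV : finrank ℂ V ≤ Fintype.card ι + 1) : OneOrth U V := by
  have : FiniteDimensional ℂ ↥(U ⊓ V) := finiteDimensional_of_le inf_le_right
  have hsum : finrank ℂ ↥(U ⊓ V) + finrank ℂ ↥((U ⊓ V)ᗮ ⊓ V) = finrank ℂ V :=
    finrank_add_inf_finrank_orthogonal inf_le_right
  have hle : Uᗮ ⊓ V ≤ (U ⊓ V)ᗮ ⊓ V := inf_le_inf_right _ (orthogonal_le inf_le_left)
  have hmono := finrank_mono hle
  have hpos : 0 < finrank ℂ ↥(U ⊓ V) := Nat.pos_of_ne_zero (mt finrank_eq_zero.1 hUV)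
  have hcard := hZ.card_le_finrank
  have hEq : Uᗮ ⊓ V = (U ⊓ V)ᗮ ⊓ V := Submodule.eq_of_le_of_finrank_le hle (by omega)
  exact oneOrth_iff.2 ⟨by omega, hEq ▸ inf_le_left⟩

theorem exists_isOneOrthWitness (hH : ¬FiniteDimensional ℂ H) {U V : Submodule ℂ H}
    [FiniteDimensional ℂ U] [FiniteDimensional ℂ V] (h : OneOrth U V) :
    ∃ Z : Fin (finrank ℂ V - 1) → Submodule ℂ H,
      (∀ i, finrank ℂ (Z i) = finrank ℂ V) ∧ IsOneOrthWitness U V Z := by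
  have : FiniteDimensional ℂ ↥(U ⊓ V) := finiteDimensional_of_le inf_le_right
  obtain ⟨hD, hBU⟩ := oneOrth_iff.1 h
  have hDV := finrank_add_inf_finrank_orthogonal (inf_le_right : U ⊓ V ≤ V)
  have hB : finrank ℂ ↥((U ⊓ V)ᗮ ⊓ V) = finrank ℂ V - 1 := by omega
  let b := (stdOrthonormalBasis ℂ ↥((U ⊓ V)ᗮ ⊓ V)).reindex (finCongr hB)
  obtain ⟨F, hFfin, hF, hFle, hFF⟩ := exists_pairwise_isOrtho_le _
    ((U ⊔ V).not_finiteDimensional_orthogonal hH) (Fin (finrank ℂ V - 1)) (finrank ℂ V - 1)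
  set v : Fin (finrank ℂ V - 1) → H := fun i => b i
  have hv : Orthonormal ℂ v := b.orthonormal.comp_linearIsometry (subtypeₗᵢ _)
  have hvU : ∀ i, ℂ ∙ v i ≤ Uᗮ := fun i => (span_singleton_le_iff_mem _ _).2 (hBU (b i).2)
  have hvV : ∀ i, v i ∈ V := fun i => (b i).2.2
  have hvF : ∀ i j, ℂ ∙ v i ⟂ F j := fun i j => (isOrtho_orthogonal_right V).mono
    ((span_singleton_le_iff_mem _ _).2 (hvV i)) ((hFle j).trans (orthogonal_le le_sup_right))
  refine ⟨fun i => ℂ ∙ v i ⊔ F i, fun i => ?_, fun i => ?_, fun i => ?_, fun i j hij => ?_⟩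
  · have := hFfin i
    rw [(hvF i i).finrank_sup, finrank_span_singleton (hv.ne_zero i), hF]
    omega
  · exact isOrtho_sup_left.2 ⟨isOrtho_iff_le.2 (hvU i),
      isOrtho_iff_le.2 ((hFle i).trans (orthogonal_le le_sup_left))⟩
  · exact (Submodule.ne_bot_iff _).2
      ⟨v i, mem_inf.2 ⟨mem_sup_left (mem_span_singleton_self _), hvV i⟩, hv.ne_zero i⟩
  · have hvv : ℂ ∙ v i ⟂ ℂ ∙ v j := isOrtho_span.2 <| by
      rintro _ rfl _ rfl
      exact hv.2 hij
    exact isOrtho_sup_left.2 ⟨isOrtho_sup_right.2 ⟨hvv, hvF i j⟩,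
      isOrtho_sup_right.2 ⟨(hvF j i).symm, hFF hij⟩⟩

end OneOrth

theorem oneOrth_preserved_general
    {H : Type*} [NormedAddCommGroup H] [InnerProductSpace ℂ H]
    (hH : ¬ FiniteDimensional ℂ H)
    (n : ℕ) (hn : 2 ≤ n)
    (φ : {U : Submodule ℂ H // Module.finrank ℂ U = n} →
         {U : Submodule ℂ H // Module.finrank ℂ U = n})
    (hperp : ∀ U V, SubPerp U.1 V.1 ↔ SubPerp (φ U).1 (φ V).1)
    (hint : ∀ U V, U.1 ⊓ V.1 = ⊥ ↔ (φ U).1 ⊓ (φ V).1 = ⊥) :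
    ∀ U V, OneOrth U.1 V.1 → OneOrth (φ U).1 (φ V).1 := by
  have hfin (W : {U : Submodule ℂ H // finrank ℂ U = n}) : FiniteDimensional ℂ W.1 :=
    Module.finite_of_finrank_pos (by rw [W.2]; omega)
  simp only [subPerp_iff_isOrtho] at hperp
  intro U V h
  obtain ⟨Z, hZn, hZ⟩ := exists_isOneOrthWitness hH h
  let W (i : Fin (finrank ℂ V.1 - 1)) : {U : Submodule ℂ H // finrank ℂ U = n} :=
    ⟨Z i, (hZn i).trans V.2⟩
  have hφZ : IsOneOrthWitness (φ U).1 (φ V).1 fun i => (φ (W i)).1 :=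
    ⟨fun i => (hperp (W i) U).1 (hZ.isOrtho_left i),
      fun i hWV => hZ.inf_ne_bot i ((hint (W i) V).2 hWV),
      fun i j hij => (hperp (W i) (W j)).1 (hZ.pairwise_isOrtho hij)⟩
  refine oneOrth_of_isOneOrthWitness hφZ (mt (hint U V).2 h.inf_ne_bot) ?_
  rw [(φ V).2, Fintype.card_fin, V.2]
  omega

/-- If `H` is infinite-dimensional, `n ≥ 2`, and `φ : P_n(H) → P_n(H)` preserves
orthogonality and trivial intersection in both directions, then `φ` preserves
1-orthogonality. -/
theorem oneOrth_preserved
    {H : Type*} [NormedAddCommGroup H] [InnerProductSpace ℂ H] [CompleteSpace H]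
    (hH : ¬ FiniteDimensional ℂ H)
    (n : ℕ) (hn : 2 ≤ n)
    (φ : {U : Submodule ℂ H // Module.finrank ℂ U = n} →
         {U : Submodule ℂ H // Module.finrank ℂ U = n})
    (hperp : ∀ U V, SubPerp U.1 V.1 ↔ SubPerp (φ U).1 (φ V).1)
    (hint : ∀ U V, U.1 ⊓ V.1 = ⊥ ↔ (φ U).1 ⊓ (φ V).1 = ⊥) :
    ∀ U V, OneOrth U.1 V.1 → OneOrth (φ U).1 (φ V).1 :=
  oneOrth_preserved_general hH n hn φ hperp hint
end

section
/- Let H be a two-dimensional complex Hilbert space and φ : P_1(H) → P_1(H) a map satisfying ma(φ(U), φ(V)) = ma(U, V) for all U, V ∈ P_1(H). Then there exists a unitary or antiunitary operator T : H → H such that φ(W) = T(W) for all W ∈ P_1(H). -/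
/-- The minimal angle between two subspaces of a complex Hilbert space. -/
noncomputable def minAngle {H : Type*} [NormedAddCommGroup H] [InnerProductSpace ℂ H]
    (U V : Submodule ℂ H) : ℝ :=
  sInf {θ : ℝ | ∃ x ∈ U, ∃ y ∈ V, ‖x‖ = 1 ∧ ‖y‖ = 1 ∧
    θ = Real.arccos ‖(inner ℂ x y : ℂ)‖}

/-!
The minimal angle between two lines is the `arccos` of their transition probability
`‖⟪x, y⟫‖ / (‖x‖ * ‖y‖)`, so `φ` preserves transition probabilities. Starting from an orthonormal
basis `e₀, e₁`, one finds an orthonormal basis `f₀, f₁` such that `φ` sends the lines through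
`e₀`, `e₁`, `e₀ + e₁` to those through `f₀`, `f₁`, `f₀ + f₁`; the line through `e₀ + i e₁` then goes
to the line through `f₀ + i f₁` or `f₀ - i f₁`, and the sign picks the unitary or antiunitary `T`
with `T eⱼ = fⱼ`. Finally, a line spanned by `a f₀ + b f₁` is determined by `|a|`, `|b|`,
`|a + b|`, `|a - i b|`, i.e. by its transition probabilities to the four lines above, so `φ`
agrees with `T` on every line.
-/

open Submodule Complex ComplexConjugate
open scoped InnerProductSpace

namespace Complex

theorem eq_I_mul_or_eq_neg_I_mul_of_norm_add {p q : ℂ} (hp : ‖p‖ = 1) (hq : ‖q‖ = 1)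
    (hpq : ‖p + q‖ = ‖1 + I‖) : q = I * p ∨ q = -I * p := by
  have hp' := normSq_eq_norm_sq p
  have hq' := normSq_eq_norm_sq q
  have hpq' := normSq_eq_norm_sq (p + q)
  rw [hpq, ← normSq_eq_norm_sq] at hpq'
  rw [hp] at hp'
  rw [hq] at hq'
  simp only [normSq_apply, add_re, add_im, one_re, one_im, I_re, I_im] at hp' hq' hpq'
  have hcross : (p.re * q.im - p.im * q.re - 1) * (p.re * q.im - p.im * q.re + 1) = 0 := by
    nlinarith
  rcases mul_eq_zero.1 hcross with h | h
  · left
    apply Complex.ext <;> simp <;> nlinarith [sq_nonneg (q.re + p.im), sq_nonneg (q.im - p.re)]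
  · right
    apply Complex.ext <;> simp <;> nlinarith [sq_nonneg (q.re - p.im), sq_nonneg (q.im + p.re)]

theorem mul_conj_eq_of_norm_add_eq {a b a' b' k : ℂ} (hk : k.im ≠ 0) (ha : ‖a‖ = ‖a'‖)
    (hb : ‖b‖ = ‖b'‖) (h₁ : ‖a + b‖ = ‖a' + b'‖) (h₂ : ‖a + k * b‖ = ‖a' + k * b'‖) :
    a * conj b = a' * conj b' := by
  have hsq : ∀ {z w : ℂ}, ‖z‖ = ‖w‖ → normSq z = normSq w := fun h => by
    rw [normSq_eq_norm_sq, normSq_eq_norm_sq, h]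
  have e₁ := hsq h₁
  have e₂ := hsq h₂
  rw [normSq_add, normSq_add, hsq ha, hsq hb] at e₁
  rw [normSq_add, normSq_add, normSq_mul, normSq_mul, hsq ha, hsq hb] at e₂
  have hre : (a * conj b).re = (a' * conj b').re := by linarith
  have him : k.im * (a * conj b).im = k.im * (a' * conj b').im := by
    simp only [map_mul, mul_re, mul_im, conj_re, conj_im] at e₂ hre ⊢
    linear_combination e₂ / 2 - k.re * hre
  exact Complex.ext hre (mul_left_cancel₀ hk him)

theorem norm_conj_mul_add_conj_mul {a b a' b' : ℂ} (ha : ‖a‖ = ‖a'‖) (hb : ‖b‖ = ‖b'‖)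
    (h : a * conj b = a' * conj b') :
    ‖conj a * a' + conj b * b'‖ = ‖a‖ ^ 2 + ‖b‖ ^ 2 := by
  have ha' : conj a * a = conj a' * a' := by rw [conj_mul', conj_mul', ha]
  have hb' : conj b * b = conj b' * b' := by rw [conj_mul', conj_mul', hb]
  have h' : conj a * b = conj a' * b' := by simpa using congrArg conj h
  have hsq : ((‖conj a * a' + conj b * b'‖ ^ 2 : ℝ) : ℂ) = ((‖a‖ ^ 2 + ‖b‖ ^ 2) ^ 2 : ℝ) := by
    push_cast
    rw [← mul_conj', ← conj_mul' a, ← conj_mul' b]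
    simp only [map_add, map_mul, conj_conj]
    linear_combination
      -(conj a * a) * ha' - conj b * b * hb' - conj a * b * h - a * conj b * h'
  exact (pow_left_inj₀ (norm_nonneg _) (by positivity) two_ne_zero).1 (ofReal_injective hsq)

end Complex

namespace EuclideanSpace

variable (ι : Type*) [Fintype ι]

noncomputable def conjLIE : EuclideanSpace ℂ ι ≃ₗᵢ⋆[ℂ] EuclideanSpace ℂ ι where
  toFun v := WithLp.toLp 2 fun i => conj (v i)
  invFun v := WithLp.toLp 2 fun i => conj (v i)
  map_add' v w := by ext; simp
  map_smul' c v := by ext; simp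
  left_inv v := by ext; simp
  right_inv v := by ext; simp
  norm_map' v := by simp [EuclideanSpace.norm_eq]

variable {ι}

@[simp]
theorem conjLIE_single [DecidableEq ι] (i : ι) (c : ℂ) :
    conjLIE ι (EuclideanSpace.single i c) = EuclideanSpace.single i (conj c) := by
  ext j
  by_cases h : j = i <;> simp [conjLIE, h]

theorem inner_conjLIE_conjLIE (v w : EuclideanSpace ℂ ι) :
    ⟪conjLIE ι v, conjLIE ι w⟫_ℂ = ⟪w, v⟫_ℂ := by
  simp [conjLIE, PiLp.inner_apply, mul_comm]

end EuclideanSpace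

namespace OrthonormalBasis

variable {ι E F : Type*} [Fintype ι] [NormedAddCommGroup E] [InnerProductSpace ℂ E]
  [NormedAddCommGroup F] [InnerProductSpace ℂ F]

noncomputable def conjEquiv (B : OrthonormalBasis ι ℂ E) (C : OrthonormalBasis ι ℂ F) :
    E ≃ₗᵢ⋆[ℂ] F :=
  B.repr.trans ((EuclideanSpace.conjLIE ι).trans C.repr.symm)

@[simp]
theorem conjEquiv_apply_basis [DecidableEq ι] (B : OrthonormalBasis ι ℂ E)
    (C : OrthonormalBasis ι ℂ F) (i : ι) : B.conjEquiv C (B i) = C i := by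
  simp [conjEquiv]

theorem inner_conjEquiv_conjEquiv (B : OrthonormalBasis ι ℂ E) (C : OrthonormalBasis ι ℂ F)
    (x y : E) : ⟪B.conjEquiv C x, B.conjEquiv C y⟫_ℂ = ⟪y, x⟫_ℂ := by
  simp [conjEquiv, EuclideanSpace.inner_conjLIE_conjLIE]

end OrthonormalBasis

section

variable {H : Type*} [NormedAddCommGroup H] [InnerProductSpace ℂ H]

theorem norm_inner_smul_smul_div (x y : H) {c d : ℂ} (hc : c ≠ 0) (hd : d ≠ 0) :
    ‖⟪c • x, d • y⟫_ℂ‖ / (‖c • x‖ * ‖d • y‖) = ‖⟪x, y⟫_ℂ‖ / (‖x‖ * ‖y‖) := by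
  have hc' : ‖c‖ ≠ 0 := norm_ne_zero_iff.2 hc
  have hd' : ‖d‖ ≠ 0 := norm_ne_zero_iff.2 hd
  rw [inner_smul_left, inner_smul_right, norm_mul, norm_mul, RCLike.norm_conj, norm_smul,
    norm_smul]
  field_simp

abbrev Ray (H : Type*) [NormedAddCommGroup H] [InnerProductSpace ℂ H] :=
  {U : Submodule ℂ H // Module.finrank ℂ U = 1}

namespace Ray

theorem eq_span_singleton (U : Ray H) {x : H} (hx : x ∈ U.1) (hx0 : x ≠ 0) : U.1 = ℂ ∙ x := by
  have : FiniteDimensional ℂ U.1 := Module.finite_of_finrank_eq_succ U.2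
  refine (eq_of_le_of_finrank_le (span_le.2 (Set.singleton_subset_iff.2 hx)) ?_).symm
  rw [finrank_span_singleton hx0, U.2]

theorem exists_mem_norm_eq (U : Ray H) {r : ℝ} (hr : 0 ≤ r) : ∃ y ∈ U.1, ‖y‖ = r := by
  obtain ⟨x, hx, hx0⟩ := (Submodule.ne_bot_iff U.1).1 fun h => by
    have h1 := U.2
    rw [h, finrank_bot] at h1
    exact zero_ne_one h1
  refine ⟨((r / ‖x‖ : ℝ) : ℂ) • x, U.1.smul_mem _ hx, ?_⟩
  rw [norm_smul, norm_real, Real.norm_of_nonneg (by positivity),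
    div_mul_cancel₀ _ (norm_ne_zero_iff.2 hx0)]

theorem norm_inner_div_eq (U V : Ray H) {x x' y y' : H} (hx : x ∈ U.1) (hx0 : x ≠ 0)
    (hx' : x' ∈ U.1) (hx'0 : x' ≠ 0) (hy : y ∈ V.1) (hy0 : y ≠ 0) (hy' : y' ∈ V.1)
    (hy'0 : y' ≠ 0) :
    ‖⟪x', y'⟫_ℂ‖ / (‖x'‖ * ‖y'‖) = ‖⟪x, y⟫_ℂ‖ / (‖x‖ * ‖y‖) := by
  obtain ⟨c, rfl⟩ := mem_span_singleton.1 (U.eq_span_singleton hx hx0 ▸ hx')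
  obtain ⟨d, rfl⟩ := mem_span_singleton.1 (V.eq_span_singleton hy hy0 ▸ hy')
  exact norm_inner_smul_smul_div x y (left_ne_zero_of_smul hx'0) (left_ne_zero_of_smul hy'0)

theorem cos_minAngle (U V : Ray H) {x y : H} (hx : x ∈ U.1) (hx0 : x ≠ 0) (hy : y ∈ V.1)
    (hy0 : y ≠ 0) : Real.cos (minAngle U.1 V.1) = ‖⟪x, y⟫_ℂ‖ / (‖x‖ * ‖y‖) := by
  have hunit : ∀ {z : H}, ‖z‖ = 1 → z ≠ 0 := fun h => norm_ne_zero_iff.1 (h ▸ one_ne_zero)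
  have hset : {θ : ℝ | ∃ x' ∈ U.1, ∃ y' ∈ V.1, ‖x'‖ = 1 ∧ ‖y'‖ = 1 ∧
      θ = Real.arccos ‖⟪x', y'⟫_ℂ‖} = {Real.arccos (‖⟪x, y⟫_ℂ‖ / (‖x‖ * ‖y‖))} := by
    refine Set.eq_singleton_iff_unique_mem.2 ⟨?_, ?_⟩
    · obtain ⟨x', hx', hx'1⟩ := U.exists_mem_norm_eq zero_le_one
      obtain ⟨y', hy', hy'1⟩ := V.exists_mem_norm_eq zero_le_one
      refine ⟨x', hx', y', hy', hx'1, hy'1, ?_⟩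
      rw [← U.norm_inner_div_eq V hx hx0 hx' (hunit hx'1) hy hy0 hy' (hunit hy'1), hx'1, hy'1,
        mul_one, div_one]
    · rintro _ ⟨x', hx', y', hy', hx'1, hy'1, rfl⟩
      rw [← U.norm_inner_div_eq V hx hx0 hx' (hunit hx'1) hy hy0 hy' (hunit hy'1), hx'1, hy'1,
        mul_one, div_one]
  rw [minAngle, hset, csInf_singleton, Real.cos_arccos (neg_one_lt_zero.le.trans (by positivity))
    (div_le_one_of_le₀ (norm_inner_le_norm x y) (by positivity))]

end Ray

theorem OrthonormalBasis.mem_span_singleton_of_norm_inner_eq (C : OrthonormalBasis (Fin 2) ℂ H)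
    {c : ℂ} (hc : c.im ≠ 0) {y z : H} (hy : y ≠ 0)
    (h : ∀ v ∈ ({C 0, C 1, C 0 + C 1, C 0 + c • C 1} : Set H), ‖⟪v, y⟫_ℂ‖ = ‖⟪v, z⟫_ℂ‖) :
    z ∈ ℂ ∙ y := by
  have h₀ := h (C 0) (by simp)
  have h₁ := h (C 1) (by simp)
  have h₂ := h (C 0 + C 1) (by simp)
  have h₃ := h (C 0 + c • C 1) (by simp)
  simp only [inner_add_left, inner_smul_left] at h₂ h₃
  have hP := mul_conj_eq_of_norm_add_eq (k := conj c) (by simpa using hc) h₀ h₁ h₂ h₃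
  have hnorm : ∀ w : H, ‖w‖ ^ 2 = ‖⟪C 0, w⟫_ℂ‖ ^ 2 + ‖⟪C 1, w⟫_ℂ‖ ^ 2 := fun w => by
    rw [← C.sum_sq_norm_inner_right, Fin.sum_univ_two]
  have hyz : ‖y‖ = ‖z‖ := by
    rw [← sq_eq_sq₀ (norm_nonneg _) (norm_nonneg _), hnorm, hnorm, h₀, h₁]
  have hcs : ‖⟪y, z⟫_ℂ‖ = ‖y‖ * ‖z‖ := by
    rw [← C.sum_inner_mul_inner, Fin.sum_univ_two, ← inner_conj_symm y (C 0),
      ← inner_conj_symm y (C 1), ← hyz, ← sq, hnorm]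
    exact norm_conj_mul_add_conj_mul h₀ h₁ hP
  exact Or.resolve_left (((norm_inner_eq_norm_tfae ℂ y z).out 0 3).1 hcs) hy

def PreservesMinAngle (φ : Ray H → Ray H) : Prop :=
  ∀ U V, minAngle (φ U).1 (φ V).1 = minAngle U.1 V.1

def MemImageRay (φ : Ray H → Ray H) (u u' : H) : Prop :=
  ∃ U : Ray H, u ∈ U.1 ∧ u' ∈ (φ U).1

theorem exists_memImageRay_norm_eq (φ : Ray H → Ray H) {u : H} (hu : u ≠ 0) {r : ℝ}
    (hr : 0 ≤ r) :
    ∃ u', MemImageRay φ u u' ∧ ‖u'‖ = r :=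
  let U : Ray H := ⟨ℂ ∙ u, finrank_span_singleton hu⟩
  let ⟨u', hu', hr'⟩ := (φ U).exists_mem_norm_eq hr
  ⟨u', ⟨U, mem_span_singleton_self u, hu'⟩, hr'⟩

variable {φ : Ray H → Ray H}

theorem MemImageRay.smul {u u' : H} (h : MemImageRay φ u u') (c : ℂ) :
    MemImageRay φ u (c • u') :=
  let ⟨U, hu, hu'⟩ := h
  ⟨U, hu, (φ U).1.smul_mem c hu'⟩

theorem MemImageRay.norm_inner_eq (hφ : PreservesMinAngle φ) {u u' x x' : H}
    (hu : MemImageRay φ u u') (hx : MemImageRay φ x x') (hnu : ‖u'‖ = ‖u‖) (hnx : ‖x'‖ = ‖x‖) :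
    ‖⟪u', x'⟫_ℂ‖ = ‖⟪u, x⟫_ℂ‖ := by
  obtain ⟨U, huU, hu'U⟩ := hu
  obtain ⟨V, hxV, hx'V⟩ := hx
  rcases eq_or_ne u 0 with rfl | hu0
  · rw [norm_zero, norm_eq_zero] at hnu
    simp [hnu]
  rcases eq_or_ne x 0 with rfl | hx0
  · rw [norm_zero, norm_eq_zero] at hnx
    simp [hnx]
  have hu'0 : u' ≠ 0 := norm_ne_zero_iff.1 (hnu ▸ norm_ne_zero_iff.2 hu0)
  have hx'0 : x' ≠ 0 := norm_ne_zero_iff.1 (hnx ▸ norm_ne_zero_iff.2 hx0)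
  have h := congrArg Real.cos (hφ U V)
  rw [Ray.cos_minAngle _ _ hu'U hu'0 hx'V hx'0, Ray.cos_minAngle _ _ huU hu0 hxV hx0, hnu,
    hnx] at h
  exact (div_left_inj' (mul_ne_zero (norm_ne_zero_iff.2 hu0) (norm_ne_zero_iff.2 hx0))).1 h

theorem exists_orthonormalBasis_memImageRay (hφ : PreservesMinAngle φ)
    (B : OrthonormalBasis (Fin 2) ℂ H) :
    ∃ C : OrthonormalBasis (Fin 2) ℂ H, MemImageRay φ (B 0) (C 0) ∧ MemImageRay φ (B 1) (C 1) ∧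
      MemImageRay φ (B 0 + B 1) (C 0 + C 1) := by
  choose g hg hg1 using fun i =>
    exists_memImageRay_norm_eq φ (B.orthonormal.ne_zero i) zero_le_one
  have hB01 : B 0 + B 1 ≠ 0 := fun h => by simpa [inner_add_right] using congrArg (⟪B 0, ·⟫_ℂ) h
  obtain ⟨w, hw, hwn⟩ := exists_memImageRay_norm_eq φ hB01 (norm_nonneg (B 0 + B 1))
  have hp : ∀ i, ‖⟪g i, w⟫_ℂ‖ = 1 := fun i => by
    rw [(hg i).norm_inner_eq hφ hw (by rw [hg1, B.norm_eq_one]) hwn]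
    fin_cases i <;> simp
  have hp' : ∀ i, ⟪w, g i⟫_ℂ * ⟪g i, w⟫_ℂ = 1 := fun i => by
    rw [← inner_conj_symm, conj_mul', hp, ofReal_one, one_pow]
  -- rescaling by these unimodular phases makes both coordinates of `w` equal to `1`
  let f i := ⟪g i, w⟫_ℂ • g i
  have hf : Orthonormal ℂ f := by
    rw [orthonormal_iff_ite]
    intro i j
    by_cases hij : i = j
    · subst hij
      simp [f, inner_self_eq_norm_sq_to_K, norm_smul, hp, hg1]
    · have h0 : ⟪g i, g j⟫_ℂ = 0 := by
        rw [← norm_eq_zero, (hg i).norm_inner_eq hφ (hg j) (by rw [hg1, B.norm_eq_one])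
          (by rw [hg1, B.norm_eq_one]), B.inner_eq_zero hij, norm_zero]
      simp [f, inner_smul_left, inner_smul_right, h0, hij]
  let C := (basisOfOrthonormalOfCardEqFinrank hf
    (Module.finrank_eq_card_basis B.toBasis).symm).toOrthonormalBasis (by simpa using hf)
  have hC : ⇑C = f := by simp [C]
  have hCw : C 0 + C 1 = w := by
    rw [← C.sum_repr' w, Fin.sum_univ_two]
    simp [hC, f, inner_smul_left, smul_smul, hp']
  refine ⟨C, ?_, ?_, hCw ▸ hw⟩ <;> rw [hC] <;> exact (hg _).smul _

theorem exists_memImageRay_add_I_smul (hφ : PreservesMinAngle φ)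
    {B C : OrthonormalBasis (Fin 2) ℂ H} (h₀ : MemImageRay φ (B 0) (C 0))
    (h₁ : MemImageRay φ (B 1) (C 1)) (h₀₁ : MemImageRay φ (B 0 + B 1) (C 0 + C 1)) :
    ∃ c : ℂ, (c = I ∨ c = -I) ∧ MemImageRay φ (B 0 + I • B 1) (C 0 + c • C 1) := by
  have hv0 : B 0 + I • B 1 ≠ 0 := fun h => by
    simpa [inner_add_right] using congrArg (⟪B 0, ·⟫_ℂ) h
  obtain ⟨w, hw, hwn⟩ := exists_memImageRay_norm_eq φ hv0 (norm_nonneg (B 0 + I • B 1))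
  have hp : ‖⟪C 0, w⟫_ℂ‖ = 1 := by
    rw [h₀.norm_inner_eq hφ hw (by simp) hwn]
    simp
  have hq : ‖⟪C 1, w⟫_ℂ‖ = 1 := by
    rw [h₁.norm_inner_eq hφ hw (by simp) hwn]
    simp
  have hpq : ‖⟪C 0, w⟫_ℂ + ⟪C 1, w⟫_ℂ‖ = ‖1 + I‖ := by
    have hn : ‖C 0 + C 1‖ = ‖B 0 + B 1‖ := by
      simpa using (B.equiv C (.refl _)).norm_map (B 0 + B 1)
    rw [← inner_add_left, h₀₁.norm_inner_eq hφ hw hn hwn]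
    simp
  have hw_eq : w = ⟪C 0, w⟫_ℂ • C 0 + ⟪C 1, w⟫_ℂ • C 1 := by
    rw [← Fin.sum_univ_two (fun i => ⟪C i, w⟫_ℂ • C i), C.sum_repr']
  have hp0 : ⟪C 0, w⟫_ℂ ≠ 0 := norm_ne_zero_iff.1 (ne_of_eq_of_ne hp one_ne_zero)
  obtain ⟨c, hc, hqc⟩ : ∃ c : ℂ, (c = I ∨ c = -I) ∧ ⟪C 1, w⟫_ℂ = c * ⟪C 0, w⟫_ℂ := by
    rcases eq_I_mul_or_eq_neg_I_mul_of_norm_add hp hq hpq with h | h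
    exacts [⟨I, .inl rfl, h⟩, ⟨-I, .inr rfl, h⟩]
  refine ⟨c, hc, ?_⟩
  rw [hqc] at hw_eq
  generalize ⟪C 0, w⟫_ℂ = p at hw_eq hp0
  rw [hw_eq] at hw
  convert hw.smul p⁻¹ using 1
  match_scalars <;> field_simp

theorem map_eq_of_memImageRay (hφ : PreservesMinAngle φ) {σ σ' : ℂ →+* ℂ}
    [RingHomInvPair σ σ'] [RingHomInvPair σ' σ] (C : OrthonormalBasis (Fin 2) ℂ H) {c : ℂ}
    (hc : c.im ≠ 0) (T : H ≃ₛₗᵢ[σ] H) (hT : ∀ u x, ‖⟪T u, T x⟫_ℂ‖ = ‖⟪u, x⟫_ℂ‖)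
    (hprobe : ∀ v ∈ ({C 0, C 1, C 0 + C 1, C 0 + c • C 1} : Set H),
      ∃ u, T u = v ∧ MemImageRay φ u v)
    (W : Ray H) : (φ W).1 = W.1.map T.toLinearEquiv.toLinearMap := by
  obtain ⟨x, hxW, hx⟩ := W.exists_mem_norm_eq zero_le_one
  obtain ⟨y, hyW, hy⟩ := (φ W).exists_mem_norm_eq zero_le_one
  have hx0 : x ≠ 0 := norm_ne_zero_iff.1 (ne_of_eq_of_ne hx one_ne_zero)
  have hy0 : y ≠ 0 := norm_ne_zero_iff.1 (ne_of_eq_of_ne hy one_ne_zero)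
  have hTx : T x ∈ (φ W).1 := by
    rw [(φ W).eq_span_singleton hyW hy0]
    refine C.mem_span_singleton_of_norm_inner_eq hc hy0 fun v hv => ?_
    obtain ⟨u, rfl, hu⟩ := hprobe v hv
    rw [hT, hu.norm_inner_eq hφ ⟨W, hxW, hyW⟩ (T.norm_map u) (hy.trans hx.symm)]
  rw [(φ W).eq_span_singleton hTx (T.map_ne_zero_iff.2 hx0), W.eq_span_singleton hxW hx0,
    map_span, Set.image_singleton]
  rfl

end

theorem minAngle_preserver_dim_two_general
    {H : Type*} [NormedAddCommGroup H] [InnerProductSpace ℂ H]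
    (hdim : Module.finrank ℂ H = 2)
    (φ : {U : Submodule ℂ H // Module.finrank ℂ U = 1} →
         {U : Submodule ℂ H // Module.finrank ℂ U = 1})
    (hφ : ∀ U V, minAngle (φ U).1 (φ V).1 = minAngle U.1 V.1) :
    (∃ T : H ≃ₗᵢ[ℂ] H, ∀ W, (φ W).1 = W.1.map T.toLinearEquiv.toLinearMap) ∨
    (∃ T : H ≃ₛₗᵢ[starRingEnd ℂ] H, ∀ W, (φ W).1 = W.1.map T.toLinearEquiv.toLinearMap) := by
  have : FiniteDimensional ℂ H := Module.finite_of_finrank_eq_succ hdim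
  let B := (stdOrthonormalBasis ℂ H).reindex (finCongr hdim)
  obtain ⟨C, h₀, h₁, h₀₁⟩ := exists_orthonormalBasis_memImageRay hφ B
  obtain ⟨c, rfl | rfl, hc⟩ := exists_memImageRay_add_I_smul hφ h₀ h₁ h₀₁
  · refine .inl ⟨B.equiv C (.refl _), map_eq_of_memImageRay hφ C (c := I) (by simp) _
      (fun u x => by rw [LinearIsometryEquiv.inner_map_map]) ?_⟩
    rintro v (rfl | rfl | rfl | rfl)
    exacts [⟨B 0, by simp, h₀⟩, ⟨B 1, by simp, h₁⟩, ⟨B 0 + B 1, by simp, h₀₁⟩,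
      ⟨B 0 + I • B 1, by simp, hc⟩]
  · refine .inr ⟨B.conjEquiv C, map_eq_of_memImageRay hφ C (c := -I) (by simp) _
      (fun u x => by rw [OrthonormalBasis.inner_conjEquiv_conjEquiv, norm_inner_symm]) ?_⟩
    rintro v (rfl | rfl | rfl | rfl)
    exacts [⟨B 0, by simp, h₀⟩, ⟨B 1, by simp, h₁⟩, ⟨B 0 + B 1, by simp, h₀₁⟩,
      ⟨B 0 + I • B 1, by simp [LinearIsometryEquiv.map_smulₛₗ], hc⟩]

/-- If `dim H = 2` and `φ : P_1(H) → P_1(H)` preserves the minimal angle, then `φ` is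
induced by a unitary or antiunitary operator. -/
theorem minAngle_preserver_dim_two
    {H : Type*} [NormedAddCommGroup H] [InnerProductSpace ℂ H] [CompleteSpace H]
    (hdim : Module.finrank ℂ H = 2)
    (φ : {U : Submodule ℂ H // Module.finrank ℂ U = 1} →
         {U : Submodule ℂ H // Module.finrank ℂ U = 1})
    (hφ : ∀ U V, minAngle (φ U).1 (φ V).1 = minAngle U.1 V.1) :
    (∃ T : H ≃ₗᵢ[ℂ] H, ∀ W, (φ W).1 = W.1.map T.toLinearEquiv.toLinearMap) ∨
    (∃ T : H ≃ₛₗᵢ[starRingEnd ℂ] H, ∀ W, (φ W).1 = W.1.map T.toLinearEquiv.toLinearMap) :=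
  minAngle_preserver_dim_two_general hdim φ hφ
end

section
/- Let n > 1 be an integer and H a complex Hilbert space with dim H = 2n. Then there is no unitary or antiunitary operator T : H → H such that the complementation map coincides with conjugation by T on all rank-n orthogonal projections, i.e., such that I − P = T P T^{-1} for every rank-n orthogonal projection P on H. -/
/-!
Fix `e ≠ 0` and put `y = T⁻¹ e`. For a rank-`n` orthogonal projection `P` with `P e = e`,
`T (P y) = e - P e = 0`, so `P y = 0`, i.e. `y ⊥ range P`. As `n ≥ 2`, some `n`-dimensional
subspace contains both `e` and `y`; its projection makes `y` orthogonal to itself, so `y = 0`,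
which is impossible since `T⁻¹` is injective.
-/

open Module Function

theorem Submodule.exists_le_finrank_eq {K V : Type*} [DivisionRing K] [AddCommGroup V]
    [Module K V] [FiniteDimensional K V] (W : Submodule K V) {n : ℕ}
    (hWn : finrank K W ≤ n) (hn : n ≤ finrank K V) :
    ∃ U : Submodule K V, W ≤ U ∧ finrank K U = n := by
  induction n with
  | zero => exact ⟨W, le_rfl, Nat.le_zero.mp hWn⟩
  | succ n ih =>
    rcases hWn.eq_or_lt with hW | hW
    · exact ⟨W, le_rfl, hW⟩
    obtain ⟨U, hWU, hU⟩ := ih (Nat.lt_succ_iff.mp hW) (Nat.le_of_succ_le hn)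
    have hUtop : U < ⊤ := by
      rw [lt_top_iff_ne_top, Ne, Submodule.eq_top_iff_finrank_eq]
      omega
    obtain ⟨v, -, hv⟩ := SetLike.exists_of_lt hUtop
    exact ⟨U ⊔ span K {v}, hWU.trans le_sup_left, by rw [finrank_sup_span_singleton hv, hU]⟩

theorem Submodule.exists_finrank_eq_mem_mem {K V : Type*} [DivisionRing K] [AddCommGroup V]
    [Module K V] [FiniteDimensional K V] {n : ℕ} (hn : 2 ≤ n) (hnV : n ≤ finrank K V)
    (x y : V) : ∃ U : Submodule K V, finrank K U = n ∧ x ∈ U ∧ y ∈ U := by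
  classical
  have hxy : finrank K (span K {x, y}) ≤ 2 := by
    have := finrank_span_finset_le_card (R := K) {x, y}
    rw [Finset.coe_pair] at this
    exact this.trans Finset.card_le_two
  obtain ⟨U, hU, hUn⟩ := exists_le_finrank_eq (span K {x, y}) (hxy.trans hn) hnV
  exact ⟨U, hUn, hU (subset_span (by simp)), hU (subset_span (by simp))⟩

theorem not_forall_sub_eq_conj_of_injective {𝕜 H : Type*} [RCLike 𝕜] [NormedAddCommGroup H]
    [InnerProductSpace 𝕜 H] [CompleteSpace H] [FiniteDimensional 𝕜 H] {n : ℕ} (hn : 2 ≤ n)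
    (hnH : n ≤ finrank 𝕜 H) {T S : H → H} (hT : Injective T) (hT0 : T 0 = 0)
    (hS : Injective S) (hS0 : S 0 = 0) :
    ¬ ∀ P : H →L[𝕜] H, IsIdempotentElem P → IsSelfAdjoint P →
        finrank 𝕜 (LinearMap.range (P : H →ₗ[𝕜] H)) = n → ∀ x : H, x - P x = T (P (S x)) := by
  intro h
  have : Nontrivial H := Module.nontrivial_of_finrank_pos (R := 𝕜) (by omega)
  obtain ⟨e, he⟩ := exists_ne (0 : H)
  have hSe : S e ≠ 0 := by rwa [← hS0, hS.ne_iff]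
  obtain ⟨V, hV, heV, hSeV⟩ := Submodule.exists_finrank_eq_mem_mem hn hnH e (S e)
  have hPSe : V.starProjection (S e) = 0 := by
    apply hT
    rw [hT0, ← h _ V.isIdempotentElem_starProjection (isSelfAdjoint_starProjection V)
      (V.range_starProjection.symm ▸ hV), Submodule.starProjection_eq_self_iff.mpr heV, sub_self]
  have hSe_perp : S e ∈ Vᗮ := by
    rw [← Submodule.ker_starProjection]
    exact hPSe
  exact hSe (Submodule.disjoint_def.mp V.orthogonal_disjoint _ hSeV hSe_perp)

/-- If `dim H = 2n` with `n > 1`, there is no unitary or antiunitary operator `T` such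
that `I − P = T P T⁻¹` for every rank-`n` orthogonal projection `P` on `H`. -/
theorem complementation_not_conjugation
    {H : Type*} [NormedAddCommGroup H] [InnerProductSpace ℂ H] [CompleteSpace H]
    (n : ℕ) (hn : 1 < n) (hdim : Module.finrank ℂ H = 2 * n) :
    ¬ ((∃ T : H ≃ₗᵢ[ℂ] H,
          ∀ P : H →L[ℂ] H, IsIdempotentElem P → IsSelfAdjoint P →
            Module.finrank ℂ (LinearMap.range (P : H →ₗ[ℂ] H)) = n →
            ∀ x : H, x - P x = T (P (T.symm x))) ∨
       (∃ T : H ≃ₛₗᵢ[starRingEnd ℂ] H,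
          ∀ P : H →L[ℂ] H, IsIdempotentElem P → IsSelfAdjoint P →
            Module.finrank ℂ (LinearMap.range (P : H →ₗ[ℂ] H)) = n →
            ∀ x : H, x - P x = T (P (T.symm x)))) := by
  have : FiniteDimensional ℂ H := Module.finite_of_finrank_pos (by omega)
  rintro (⟨T, hT⟩ | ⟨T, hT⟩) <;>
    exact not_forall_sub_eq_conj_of_injective hn (by omega) T.injective (map_zero T)
      T.symm.injective (map_zero T.symm) hT
end

section
/- Let H be an infinite-dimensional complex Hilbert space, n > 1 an integer, and φ : P_n(H) → P_n(H) a map such that for every pair U, V ∈ P_n(H): ma(φ(U), φ(V)) = π/2 if and only if ma(U, V) = π/2, and ma(φ(U), φ(V)) = 0 if and only if ma(U, V) = 0. Then φ preserves adjacency: for all U, V ∈ P_n(H), if dim(U ∩ V) = n − 1 then dim(φ(U) ∩ φ(V)) = n − 1. -/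
open Module Submodule Real
open scoped InnerProductSpace

section OrthogonalFamilies

variable {𝕜 H : Type*} [RCLike 𝕜] [NormedAddCommGroup H] [InnerProductSpace 𝕜 H]

theorem Submodule.exists_mem_norm_eq_one {U : Submodule 𝕜 H} (hU : U ≠ ⊥) :
    ∃ x ∈ U, ‖x‖ = 1 := by
  obtain ⟨x, hx, hx0⟩ := U.ne_bot_iff.1 hU
  exact ⟨(‖x‖⁻¹ : 𝕜) • x, U.smul_mem _ hx, norm_smul_inv_norm hx0⟩

theorem Submodule.ne_bot_of_finrank_eq {n : ℕ} (hn : 0 < n) {U : Submodule 𝕜 H}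
    (hU : finrank 𝕜 U = n) : U ≠ ⊥ := by
  rintro rfl
  rw [finrank_bot] at hU
  omega

theorem Orthonormal.finrank_span_range {n : ℕ} {v : Fin n → H} (hv : Orthonormal 𝕜 v) :
    finrank 𝕜 (span 𝕜 (Set.range v)) = n := by
  rw [finrank_span_eq_card hv.linearIndependent, Fintype.card_fin]

theorem exists_orthonormal_mem_orthogonal (hH : ¬FiniteDimensional 𝕜 H) (S : Submodule 𝕜 H)
    [FiniteDimensional 𝕜 S] (ι : Type*) [Fintype ι] :
    ∃ e : ι → H, Orthonormal 𝕜 e ∧ ∀ i, e i ∈ Sᗮ := by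
  have hS : ¬Module.Finite 𝕜 Sᗮ := fun _ => hH <| by
    have : FiniteDimensional 𝕜 (⊤ : Submodule 𝕜 H) :=
      S.sup_orthogonal_of_hasOrthogonalProjection ▸ inferInstance
    exact Module.Finite.equiv topEquiv
  obtain ⟨v, hv⟩ := exists_linearIndependent_of_le_rank (R := 𝕜) (M := Sᗮ)
    (n := Fintype.card ι) (Cardinal.natCast_lt_aleph0.le.trans
      (not_lt.1 (mt Module.rank_lt_aleph0_iff.1 hS)))
  set f : Fin (Fintype.card ι) → Sᗮ := InnerProductSpace.gramSchmidtNormed 𝕜 v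
  exact ⟨fun i => f (Fintype.equivFin ι i),
    ((InnerProductSpace.gramSchmidtNormed_orthonormal hv).comp_linearIsometry
      Sᗮ.subtypeₗᵢ).comp _ (Fintype.equivFin ι).injective, fun i => (f _).2⟩

theorem Submodule.card_le_finrank_of_pairwise_isOrtho {ι : Type*} [Fintype ι]
    {T : ι → Submodule 𝕜 H} (hT : Pairwise fun i j => T i ⟂ T j) {W : Submodule 𝕜 H}
    [FiniteDimensional 𝕜 W] (hTW : ∀ i, T i ⊓ W ≠ ⊥) : Fintype.card ι ≤ finrank 𝕜 W := by
  choose x hx hx0 using fun i => (T i ⊓ W).ne_bot_iff.1 (hTW i)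
  have hli : LinearIndependent 𝕜 x := linearIndependent_of_ne_zero_of_inner_eq_zero hx0
    fun i j hij => (hT hij).inner_eq (hx i).1 (hx j).1
  rw [← finrank_span_eq_card hli]
  exact finrank_mono (span_le.2 <| Set.range_subset_iff.2 fun i => (hx i).2)

theorem Submodule.card_add_finrank_inf_le {ι : Type*} [Fintype ι] {T S : Submodule 𝕜 H}
    [FiniteDimensional 𝕜 T] {E : ι → Submodule 𝕜 H} (hE : Pairwise fun i j => E i ⟂ E j)
    (hTE : ∀ i, T ⊓ E i ≠ ⊥) (hES : ∀ i, E i ⟂ S) :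
    Fintype.card ι + finrank 𝕜 (T ⊓ S : Submodule 𝕜 H) ≤ finrank 𝕜 T := by
  set W := Sᗮ ⊓ T
  have hW : W ≤ T := inf_le_right
  have : FiniteDimensional 𝕜 W := finiteDimensional_of_le hW
  have hcard : Fintype.card ι ≤ finrank 𝕜 W := by
    refine card_le_finrank_of_pairwise_isOrtho hE fun i h => hTE i (eq_bot_iff.2 ?_)
    rw [← h, inf_comm]
    exact le_inf inf_le_left (le_inf (inf_le_left.trans (isOrtho_iff_le.1 (hES i))) inf_le_right)
  have hS : T ⊓ S ≤ Wᗮ ⊓ T :=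
    le_inf ((inf_le_right.trans (le_orthogonal_orthogonal S)).trans (orthogonal_le inf_le_left))
      inf_le_left
  have := finrank_add_inf_finrank_orthogonal hW
  have := finrank_mono (R := 𝕜) hS
  omega

theorem Submodule.inf_inf_ne_bot_of_finrank_inf_sup_le_one {T U V : Submodule 𝕜 H}
    [FiniteDimensional 𝕜 T]
    (h : finrank 𝕜 (T ⊓ (U ⊔ V) : Submodule 𝕜 H) ≤ 1) (hU : T ⊓ U ≠ ⊥) (hV : T ⊓ V ≠ ⊥) :
    T ⊓ (U ⊓ V) ≠ ⊥ := by
  obtain ⟨x, ⟨hxT, hxU⟩, hx0⟩ := (T ⊓ U).ne_bot_iff.1 hU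
  obtain ⟨y, ⟨hyT, hyV⟩, hy0⟩ := (T ⊓ V).ne_bot_iff.1 hV
  have : FiniteDimensional 𝕜 (T ⊓ (U ⊔ V) : Submodule 𝕜 H) :=
    finiteDimensional_of_le inf_le_left
  have hline : span 𝕜 {y} = T ⊓ (U ⊔ V) :=
    eq_of_le_of_finrank_le (span_le.2 <| Set.singleton_subset_iff.2 ⟨hyT, mem_sup_right hyV⟩)
      (h.trans (finrank_span_singleton hy0).ge)
  have hxV : x ∈ V :=
    span_le.2 (Set.singleton_subset_iff.2 hyV) (hline ▸ ⟨hxT, mem_sup_left hxU⟩)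
  exact (T ⊓ (U ⊓ V)).ne_bot_iff.2 ⟨x, ⟨hxT, hxU, hxV⟩, hx0⟩

theorem Submodule.span_singleton_sup_inf_eq_bot {S V W : Submodule 𝕜 H} {u : H} (hu : u ∈ S)
    (huV : u ∉ V) (hV : V ≤ S) (hW : W ≤ Sᗮ) : (span 𝕜 {u} ⊔ W) ⊓ V = ⊥ := by
  refine eq_bot_iff.2 fun x ⟨hx, hxV⟩ => ?_
  obtain ⟨a, ha, w, hw, rfl⟩ := mem_sup.1 hx
  obtain ⟨c, rfl⟩ := mem_span_singleton.1 ha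
  have hw0 : w = 0 := by
    refine (mem_bot 𝕜).1 (S.inf_orthogonal_eq_bot ▸ ⟨?_, hW hw⟩)
    simpa using S.sub_mem (hV hxV) (S.smul_mem c hu)
  subst hw0
  rcases eq_or_ne c 0 with rfl | hc
  · simp
  · exact absurd ((V.smul_mem_iff hc).1 (by simpa using hxV)) huV

end OrthogonalFamilies

section MinAngle

variable {H : Type*} [NormedAddCommGroup H] [InnerProductSpace ℂ H] {U V : Submodule ℂ H}

theorem minAngle_le {x y : H} (hx : x ∈ U) (hy : y ∈ V) (hx1 : ‖x‖ = 1) (hy1 : ‖y‖ = 1) :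
    minAngle U V ≤ arccos ‖⟪x, y⟫_ℂ‖ :=
  csInf_le ⟨0, by rintro _ ⟨x, -, y, -, -, -, rfl⟩; exact arccos_nonneg _⟩
    ⟨x, hx, y, hy, hx1, hy1, rfl⟩

theorem le_minAngle (hU : U ≠ ⊥) (hV : V ≠ ⊥) {θ : ℝ}
    (h : ∀ x ∈ U, ∀ y ∈ V, ‖x‖ = 1 → ‖y‖ = 1 → θ ≤ arccos ‖⟪x, y⟫_ℂ‖) :
    θ ≤ minAngle U V := by
  obtain ⟨x, hx, hx1⟩ := exists_mem_norm_eq_one hU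
  obtain ⟨y, hy, hy1⟩ := exists_mem_norm_eq_one hV
  refine le_csInf ⟨_, x, hx, y, hy, hx1, hy1, rfl⟩ ?_
  rintro _ ⟨x, hx, y, hy, hx1, hy1, rfl⟩
  exact h x hx y hy hx1 hy1

theorem minAngle_eq_pi_div_two_iff (hU : U ≠ ⊥) (hV : V ≠ ⊥) :
    minAngle U V = π / 2 ↔ U ⟂ V := by
  refine ⟨fun h => isOrtho_iff_inner_eq.2 fun x hx y hy => ?_, fun h => le_antisymm ?_ ?_⟩
  · by_contra hxy
    have hx0 : x ≠ 0 := by rintro rfl; simp at hxy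
    have hy0 : y ≠ 0 := by rintro rfl; simp at hxy
    have hpos : 0 < ‖⟪(‖x‖⁻¹ : ℂ) • x, (‖y‖⁻¹ : ℂ) • y⟫_ℂ‖ := by
      simp [hx0, hy0, hxy]
    have := (minAngle_le (U.smul_mem _ hx) (V.smul_mem _ hy) (norm_smul_inv_norm hx0)
      (norm_smul_inv_norm hy0)).trans_lt (arccos_lt_pi_div_two.2 hpos)
    exact this.ne h
  · obtain ⟨x, hx, hx1⟩ := exists_mem_norm_eq_one hU
    obtain ⟨y, hy, hy1⟩ := exists_mem_norm_eq_one hV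
    simpa [h.inner_eq hx hy] using minAngle_le hx hy hx1 hy1
  · exact le_minAngle hU hV fun x hx y hy _ _ => by simp [h.inner_eq hx hy]

theorem exists_minAngle_eq [FiniteDimensional ℂ U] [FiniteDimensional ℂ V]
    (hU : U ≠ ⊥) (hV : V ≠ ⊥) :
    ∃ x ∈ U, ∃ y ∈ V, ‖x‖ = 1 ∧ ‖y‖ = 1 ∧ minAngle U V = arccos ‖⟪x, y⟫_ℂ‖ := by
  have : Nontrivial U := U.nontrivial_iff_ne_bot.2 hU
  have : Nontrivial V := V.nontrivial_iff_ne_bot.2 hV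
  obtain ⟨⟨x, y⟩, ⟨hx, hy⟩, hmin⟩ :=
    ((isCompact_sphere (0 : U) 1).prod (isCompact_sphere (0 : V) 1)).exists_isMinOn
      ((NormedSpace.sphere_nonempty.2 zero_le_one).prod
        (NormedSpace.sphere_nonempty.2 zero_le_one))
      (by fun_prop : Continuous fun p : U × V => arccos ‖⟪(p.1 : H), p.2⟫_ℂ‖).continuousOn
  simp only [mem_sphere_zero_iff_norm] at hx hy
  refine ⟨x, x.2, y, y.2, hx, hy, le_antisymm (minAngle_le x.2 y.2 hx hy) ?_⟩
  refine le_minAngle hU hV fun x' hx' y' hy' hx'1 hy'1 => ?_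
  exact hmin (a := (⟨x', hx'⟩, ⟨y', hy'⟩)) ⟨by simpa using hx'1, by simpa using hy'1⟩

theorem minAngle_eq_zero_iff [FiniteDimensional ℂ U] [FiniteDimensional ℂ V]
    (hU : U ≠ ⊥) (hV : V ≠ ⊥) : minAngle U V = 0 ↔ U ⊓ V ≠ ⊥ := by
  constructor
  · intro h
    obtain ⟨x, hx, y, hy, hx1, hy1, hxy⟩ := exists_minAngle_eq hU hV
    have hx0 : x ≠ 0 := by rintro rfl; simp at hx1
    have hy0 : y ≠ 0 := by rintro rfl; simp at hy1
    have hcs : ‖⟪x, y⟫_ℂ‖ = ‖x‖ * ‖y‖ := by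
      rw [hx1, hy1, mul_one]
      exact le_antisymm (by simpa [hx1, hy1] using norm_inner_le_norm (𝕜 := ℂ) x y)
        (arccos_eq_zero.1 (hxy.symm.trans h))
    obtain ⟨r, -, rfl⟩ := (norm_inner_eq_norm_iff hx0 hy0).1 hcs
    exact (U ⊓ V).ne_bot_iff.2 ⟨r • x, ⟨U.smul_mem r hx, hy⟩, hy0⟩
  · intro h
    obtain ⟨z, ⟨hzU, hzV⟩, hz1⟩ := exists_mem_norm_eq_one h
    refine le_antisymm ?_ (le_minAngle hU hV fun _ _ _ _ _ _ => arccos_nonneg _)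
    simpa [inner_self_eq_norm_sq_to_K, hz1] using minAngle_le hzU hzV hz1 hz1

end MinAngle

def AdjacencyWitness {P : Type*} (orth meet : P → P → Prop) (m : ℕ) (U V : P) : Prop :=
  ∃ (T E : Fin m → P) (F : P),
    (Pairwise fun i j => orth (T i) (T j)) ∧ (Pairwise fun k l => orth (E k) (E l)) ∧
    (∀ i, meet (T i) U ∧ meet (T i) V) ∧ (∀ i k, meet (T i) (E k)) ∧
    (∀ k, orth (E k) U ∧ orth (E k) V) ∧ meet F U ∧ ¬meet F V

theorem AdjacencyWitness.map {P Q : Type*} {orth meet : P → P → Prop}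
    {orth' meet' : Q → Q → Prop} (f : P → Q) (horth : ∀ A B, orth' (f A) (f B) ↔ orth A B)
    (hmeet : ∀ A B, meet' (f A) (f B) ↔ meet A B) {m : ℕ} {U V : P}
    (h : AdjacencyWitness orth meet m U V) : AdjacencyWitness orth' meet' m (f U) (f V) := by
  obtain ⟨T, E, F, hTT, hEE, hTUV, hTE, hEUV, hFU, hFV⟩ := h
  refine ⟨f ∘ T, f ∘ E, f F, fun i j hij => ?_, fun k l hkl => ?_, fun i => ?_, fun i k => ?_,
    fun k => ?_, ?_, ?_⟩ <;>
    simp only [Function.comp_apply, horth, hmeet] <;> solve_by_elim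

section Adjacency

variable {𝕜 H : Type*} [RCLike 𝕜] [NormedAddCommGroup H] [InnerProductSpace 𝕜 H]

theorem finrank_inf_eq_of_adjacencyWitness {n : ℕ} (hn : 0 < n)
    {U V : {U : Submodule 𝕜 H // finrank 𝕜 U = n}}
    (h : AdjacencyWitness (fun A B => A.1 ⟂ B.1) (fun A B => A.1 ⊓ B.1 ≠ ⊥) (n - 1) U V) :
    finrank 𝕜 (U.1 ⊓ V.1 : Submodule 𝕜 H) = n - 1 := by
  obtain ⟨T, E, F, hTT, hEE, hTUV, hTE, hEUV, hFU, hFV⟩ := h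
  have (A : {U : Submodule 𝕜 H // finrank 𝕜 U = n}) : FiniteDimensional 𝕜 A.1 :=
    Module.finite_of_finrank_pos (hn.trans_eq A.2.symm)
  have hline (i : Fin (n - 1)) : finrank 𝕜 ((T i).1 ⊓ (U.1 ⊔ V.1) : Submodule 𝕜 H) ≤ 1 := by
    have := card_add_finrank_inf_le hEE (hTE i) fun k => isOrtho_sup_right.2 (hEUV k)
    rw [Fintype.card_fin, (T i).2] at this
    omega
  have hge : n - 1 ≤ finrank 𝕜 (U.1 ⊓ V.1 : Submodule 𝕜 H) := by
    simpa using card_le_finrank_of_pairwise_isOrtho hTT fun i =>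
      inf_inf_ne_bot_of_finrank_inf_sup_le_one (hline i) (hTUV i).1 (hTUV i).2
  have hne : finrank 𝕜 (U.1 ⊓ V.1 : Submodule 𝕜 H) ≠ n := fun heq => by
    have hUV : U.1 ≤ V.1 := inf_eq_left.1 (eq_of_le_of_finrank_eq inf_le_left (heq.trans U.2.symm))
    exact hFV fun hbot => hFU (eq_bot_iff.2 (hbot ▸ inf_le_inf_left _ hUV))
  have := finrank_mono (R := 𝕜) (inf_le_left : U.1 ⊓ V.1 ≤ U.1)
  omega

theorem adjacencyWitness_of_orthonormal {m : ℕ}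
    {U V : {U : Submodule 𝕜 H // finrank 𝕜 U = m + 1}} {k : Fin m → H} (hk : Orthonormal 𝕜 k)
    (hkU : ∀ i, k i ∈ U.1) (hkV : ∀ i, k i ∈ V.1) {u : H} (hu : ‖u‖ = 1) (huU : u ∈ U.1)
    (huV : u ∉ V.1) {e : Fin (m + 1) × Fin m → H} (he : Orthonormal 𝕜 e)
    (heS : ∀ a, e a ∈ (U.1 ⊔ V.1)ᗮ) :
    AdjacencyWitness (fun A B => A.1 ⟂ B.1) (fun A B => A.1 ⊓ B.1 ≠ ⊥) m U V := by
  have hSe {x : H} (hx : x ∈ U.1 ⊔ V.1) (a) : ⟪x, e a⟫_𝕜 = 0 :=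
    inner_right_of_mem_orthogonal hx (heS a)
  have hrow (r : Fin (m + 1)) : Orthonormal 𝕜 fun j => e (r, j) :=
    he.comp _ fun j j' h => by simpa using h
  let T (i : Fin m) : {U : Submodule 𝕜 H // finrank 𝕜 U = m + 1} :=
    ⟨span 𝕜 (Set.range (Matrix.vecCons (k i) fun j => e (i.castSucc, j))),
      (orthonormal_vecCons_iff.2
        ⟨hk.1 i, fun j => hSe (mem_sup_left (hkU i)) _, hrow _⟩).finrank_span_range⟩
  let E (j : Fin m) : {U : Submodule 𝕜 H // finrank 𝕜 U = m + 1} :=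
    ⟨span 𝕜 (Set.range fun r => e (r, j)),
      (he.comp _ fun r r' h => by simpa using h).finrank_span_range⟩
  let F : {U : Submodule 𝕜 H // finrank 𝕜 U = m + 1} :=
    ⟨span 𝕜 (Set.range (Matrix.vecCons u fun j => e (Fin.last m, j))),
      (orthonormal_vecCons_iff.2
        ⟨hu, fun j => hSe (mem_sup_left huU) _, hrow _⟩).finrank_span_range⟩
  have hES (j : Fin m) : (E j).1 ≤ (U.1 ⊔ V.1)ᗮ :=
    span_le.2 <| Set.range_subset_iff.2 fun _ => heS _
  refine ⟨T, E, F, fun i i' hii' => ?_, fun j j' hjj' => ?_, fun i => ⟨?_, ?_⟩, fun i j => ?_,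
    fun j => ⟨?_, ?_⟩, ?_, ?_⟩
  · simp only [T, isOrtho_span, Matrix.range_cons, Set.mem_union, Set.mem_singleton_iff,
      Set.mem_range]
    rintro _ (rfl | ⟨j, rfl⟩) _ (rfl | ⟨j', rfl⟩)
    · exact hk.2 hii'
    · exact hSe (mem_sup_left (hkU i)) _
    · exact inner_left_of_mem_orthogonal (mem_sup_left (hkU i')) (heS _)
    · exact he.2 (by simp [hii'])
  · simp only [E, isOrtho_span, Set.mem_range]
    rintro _ ⟨r, rfl⟩ _ ⟨r', rfl⟩
    exact he.2 (by simp [hjj'])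
  · exact (Submodule.ne_bot_iff _).2 ⟨k i, ⟨subset_span ⟨0, rfl⟩, hkU i⟩, hk.ne_zero i⟩
  · exact (Submodule.ne_bot_iff _).2 ⟨k i, ⟨subset_span ⟨0, rfl⟩, hkV i⟩, hk.ne_zero i⟩
  · exact (Submodule.ne_bot_iff _).2
      ⟨e (i.castSucc, j), ⟨subset_span ⟨j.succ, rfl⟩, subset_span ⟨_, rfl⟩⟩, he.ne_zero _⟩
  · exact isOrtho_iff_le.2 ((hES j).trans (orthogonal_le le_sup_left))
  · exact isOrtho_iff_le.2 ((hES j).trans (orthogonal_le le_sup_right))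
  · exact (Submodule.ne_bot_iff _).2
      ⟨u, ⟨subset_span ⟨0, rfl⟩, huU⟩, fun h0 => huV (h0 ▸ V.1.zero_mem)⟩
  · simp only [F, ne_eq, not_not, Matrix.range_cons, span_union]
    exact span_singleton_sup_inf_eq_bot (mem_sup_left huU) huV le_sup_right
      (span_le.2 <| Set.range_subset_iff.2 fun _ => heS _)

theorem adjacencyWitness_of_finrank_inf_eq (hH : ¬FiniteDimensional 𝕜 H) {n : ℕ} (hn : 0 < n)
    {U V : {U : Submodule 𝕜 H // finrank 𝕜 U = n}}
    (h : finrank 𝕜 (U.1 ⊓ V.1 : Submodule 𝕜 H) = n - 1) :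
    AdjacencyWitness (fun A B => A.1 ⟂ B.1) (fun A B => A.1 ⊓ B.1 ≠ ⊥) (n - 1) U V := by
  obtain ⟨m, rfl⟩ : ∃ m, n = m + 1 := ⟨n - 1, by omega⟩
  rw [Nat.add_sub_cancel] at h ⊢
  have : FiniteDimensional 𝕜 U.1 := Module.finite_of_finrank_pos (hn.trans_eq U.2.symm)
  have : FiniteDimensional 𝕜 V.1 := Module.finite_of_finrank_pos (hn.trans_eq V.2.symm)
  let b := (stdOrthonormalBasis 𝕜 (U.1 ⊓ V.1 : Submodule 𝕜 H)).reindex (finCongr h)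
  obtain ⟨u, huU, huV⟩ : ∃ u ∈ U.1, u ∉ V.1 := SetLike.not_le_iff_exists.1 fun hUV => by
    rw [inf_eq_left.2 hUV, U.2] at h
    omega
  have hu : u ≠ 0 := fun h0 => huV (h0 ▸ V.1.zero_mem)
  obtain ⟨e, he, heS⟩ := exists_orthonormal_mem_orthogonal hH (U.1 ⊔ V.1) (Fin (m + 1) × Fin m)
  exact adjacencyWitness_of_orthonormal (k := fun i => b i)
    (b.orthonormal.comp_linearIsometry (U.1 ⊓ V.1).subtypeₗᵢ) (fun i => (b i).2.1)
    (fun i => (b i).2.2) (norm_smul_inv_norm (𝕜 := 𝕜) hu) (U.1.smul_mem _ huU)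
    (fun hu' => huV ((V.1.smul_mem_iff (by simpa using hu)).1 hu')) he heS

end Adjacency

theorem finrank_inf_eq_pred_iff_adjacencyWitness {H : Type*} [NormedAddCommGroup H]
    [InnerProductSpace ℂ H] (hH : ¬FiniteDimensional ℂ H) {n : ℕ} (hn : 0 < n)
    (U V : {U : Submodule ℂ H // finrank ℂ U = n}) :
    finrank ℂ (U.1 ⊓ V.1 : Submodule ℂ H) = n - 1 ↔
      AdjacencyWitness (fun A B : {U : Submodule ℂ H // finrank ℂ U = n} =>
        minAngle A.1 B.1 = π / 2) (fun A B => minAngle A.1 B.1 = 0) (n - 1) U V := by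
  have (A : {U : Submodule ℂ H // finrank ℂ U = n}) : FiniteDimensional ℂ A.1 :=
    Module.finite_of_finrank_pos (hn.trans_eq A.2.symm)
  have horth (A B : {U : Submodule ℂ H // finrank ℂ U = n}) :
      minAngle A.1 B.1 = π / 2 ↔ A.1 ⟂ B.1 :=
    minAngle_eq_pi_div_two_iff (ne_bot_of_finrank_eq hn A.2) (ne_bot_of_finrank_eq hn B.2)
  have hmeet (A B : {U : Submodule ℂ H // finrank ℂ U = n}) :
      minAngle A.1 B.1 = 0 ↔ A.1 ⊓ B.1 ≠ ⊥ :=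
    minAngle_eq_zero_iff (ne_bot_of_finrank_eq hn A.2) (ne_bot_of_finrank_eq hn B.2)
  exact ⟨fun h => (adjacencyWitness_of_finrank_inf_eq hH hn h).map id horth hmeet,
    fun h => finrank_inf_eq_of_adjacencyWitness hn
      (h.map id (fun A B => (horth A B).symm) fun A B => (hmeet A B).symm)⟩

theorem adjacency_preserved_general
    {H : Type*} [NormedAddCommGroup H] [InnerProductSpace ℂ H]
    (hH : ¬ FiniteDimensional ℂ H)
    (n : ℕ) (hn : 1 < n)
    (φ : {U : Submodule ℂ H // Module.finrank ℂ U = n} →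
         {U : Submodule ℂ H // Module.finrank ℂ U = n})
    (hφ₁ : ∀ U V, minAngle (φ U).1 (φ V).1 = Real.pi / 2 ↔ minAngle U.1 V.1 = Real.pi / 2)
    (hφ₂ : ∀ U V, minAngle (φ U).1 (φ V).1 = 0 ↔ minAngle U.1 V.1 = 0) :
    ∀ U V, Module.finrank ℂ (U.1 ⊓ V.1 : Submodule ℂ H) = n - 1 →
      Module.finrank ℂ ((φ U).1 ⊓ (φ V).1 : Submodule ℂ H) = n - 1 := by
  intro U V hUV
  rw [finrank_inf_eq_pred_iff_adjacencyWitness hH (by omega)] at hUV ⊢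
  exact hUV.map φ hφ₁ hφ₂

/-- If `H` is infinite-dimensional, `n > 1`, and `φ : P_n(H) → P_n(H)` preserves the
properties `ma(·,·) = π/2` and `ma(·,·) = 0` in both directions, then `φ` preserves
adjacency: `dim (U ∩ V) = n − 1` implies `dim (φ(U) ∩ φ(V)) = n − 1`. -/
theorem adjacency_preserved
    {H : Type*} [NormedAddCommGroup H] [InnerProductSpace ℂ H] [CompleteSpace H]
    (hH : ¬ FiniteDimensional ℂ H)
    (n : ℕ) (hn : 1 < n)
    (φ : {U : Submodule ℂ H // Module.finrank ℂ U = n} →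
         {U : Submodule ℂ H // Module.finrank ℂ U = n})
    (hφ₁ : ∀ U V, minAngle (φ U).1 (φ V).1 = Real.pi / 2 ↔ minAngle U.1 V.1 = Real.pi / 2)
    (hφ₂ : ∀ U V, minAngle (φ U).1 (φ V).1 = 0 ↔ minAngle U.1 V.1 = 0) :
    ∀ U V, Module.finrank ℂ (U.1 ⊓ V.1 : Submodule ℂ H) = n - 1 →
      Module.finrank ℂ ((φ U).1 ⊓ (φ V).1 : Submodule ℂ H) = n - 1 :=
  adjacency_preserved_general hH n hn φ hφ₁ hφ₂
end

section
/- Let H be a complex Hilbert space with dim H ≥ 3 (possibly infinite) and T : H → H a bijective linear map such that for all x, y ∈ H, ⟨x, y⟩ = 0 implies ⟨Tx, Ty⟩ = 0. Then T is a scalar multiple of a linear isometry: there exists a constant c > 0 such that ‖Tx‖ = c‖x‖ for all x ∈ H. -/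
/-!
If `u, v` are orthogonal of equal norm then `u + v ⟂ u - v`; applying an orthogonality preserving
`T` and expanding gives `‖T u‖ = ‖T v‖`. In dimension at least three any two vectors of equal norm
are both orthogonal to a third vector of that norm, so `‖T x‖` depends only on `‖x‖`, and
homogeneity makes it `‖T e‖ * ‖x‖` for a unit vector `e`.
-/

open scoped InnerProductSpace

section

variable {𝕜 E F : Type*} [RCLike 𝕜]
  [NormedAddCommGroup E] [InnerProductSpace 𝕜 E] [NormedAddCommGroup F] [InnerProductSpace 𝕜 F]

theorem inner_add_sub_eq_zero_of_norm_eq_of_inner_eq_zero {u v : E} (hnorm : ‖u‖ = ‖v‖)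
    (huv : ⟪u, v⟫_𝕜 = 0) : ⟪u + v, u - v⟫_𝕜 = 0 := by
  have hvu : ⟪v, u⟫_𝕜 = 0 := inner_eq_zero_symm.mp huv
  simp only [inner_add_left, inner_sub_right, huv, hvu, inner_self_eq_norm_sq_to_K, hnorm]
  ring

theorem LinearMap.norm_map_eq_of_inner_map_eq_zero (T : E →ₗ[𝕜] F)
    (horth : ∀ x y : E, ⟪x, y⟫_𝕜 = 0 → ⟪T x, T y⟫_𝕜 = 0) {u v : E} (hnorm : ‖u‖ = ‖v‖)
    (huv : ⟪u, v⟫_𝕜 = 0) : ‖T u‖ = ‖T v‖ := by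
  have himage_orth : ⟪T u, T v⟫_𝕜 = 0 := horth u v huv
  have himage_diag : ⟪T u + T v, T u - T v⟫_𝕜 = 0 := by
    simpa only [map_add, map_sub] using
      horth _ _ (inner_add_sub_eq_zero_of_norm_eq_of_inner_eq_zero hnorm huv)
  have hsq : (‖T u‖ : 𝕜) ^ 2 = (‖T v‖ : 𝕜) ^ 2 := by
    simpa only [inner_add_left, inner_sub_right, himage_orth, inner_eq_zero_symm.mp himage_orth,
      inner_self_eq_norm_sq_to_K, sub_zero, add_zero, zero_add, sub_eq_zero]
      using himage_diag
  exact (pow_left_inj₀ (norm_nonneg _) (norm_nonneg _) two_ne_zero).mp (mod_cast hsq)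

theorem exists_ne_zero_inner_eq_zero_of_three_le_rank (hdim : (3 : Cardinal) ≤ Module.rank 𝕜 E)
    (u v : E) : ∃ w : E, w ≠ 0 ∧ ⟪u, w⟫_𝕜 = 0 ∧ ⟪v, w⟫_𝕜 = 0 := by
  set K : Submodule 𝕜 E := Submodule.span 𝕜 {u, v}
  have : FiniteDimensional 𝕜 K :=
    FiniteDimensional.span_of_finite 𝕜 ((Set.finite_singleton v).insert u)
  have hK : Kᗮ ≠ ⊥ := by
    intro hbot
    have hrank : Module.rank 𝕜 K ≤ 2 :=
      (rank_span_le _).trans (Cardinal.mk_insert_le.trans (by norm_num))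
    rw [Submodule.orthogonal_eq_bot_iff.mp hbot, rank_top] at hrank
    exact absurd (hdim.trans hrank) (by norm_num)
  obtain ⟨w, hwK, hw⟩ := Submodule.exists_mem_ne_zero_of_ne_bot hK
  exact ⟨w, hw, hwK u (Submodule.subset_span (by simp)), hwK v (Submodule.subset_span (by simp))⟩

theorem exists_norm_eq_inner_eq_zero_of_three_le_rank (hdim : (3 : Cardinal) ≤ Module.rank 𝕜 E)
    (u v : E) {r : ℝ} (hr : 0 ≤ r) : ∃ z : E, ‖z‖ = r ∧ ⟪u, z⟫_𝕜 = 0 ∧ ⟪v, z⟫_𝕜 = 0 := by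
  obtain ⟨w, hw, huw, hvw⟩ := exists_ne_zero_inner_eq_zero_of_three_le_rank hdim u v
  refine ⟨((r / ‖w‖ : ℝ) : 𝕜) • w, ?_, ?_, ?_⟩
  · rw [norm_smul, RCLike.norm_ofReal, abs_of_nonneg (by positivity),
      div_mul_cancel₀ _ (norm_ne_zero_iff.mpr hw)]
  · rw [inner_smul_right, huw, mul_zero]
  · rw [inner_smul_right, hvw, mul_zero]

theorem LinearMap.norm_map_eq_of_norm_eq_of_three_le_rank
    (hdim : (3 : Cardinal) ≤ Module.rank 𝕜 E) (T : E →ₗ[𝕜] F)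
    (horth : ∀ x y : E, ⟪x, y⟫_𝕜 = 0 → ⟪T x, T y⟫_𝕜 = 0) {u v : E} (hnorm : ‖u‖ = ‖v‖) :
    ‖T u‖ = ‖T v‖ := by
  obtain ⟨z, hz, huz, hvz⟩ := exists_norm_eq_inner_eq_zero_of_three_le_rank hdim u v (norm_nonneg u)
  rw [T.norm_map_eq_of_inner_map_eq_zero horth hz.symm huz,
    ← T.norm_map_eq_of_inner_map_eq_zero horth (hz.trans hnorm).symm hvz]

end

theorem orthogonality_preserving_bijection_is_scalar_multiple_of_isometry_general
    {H : Type*} [NormedAddCommGroup H] [InnerProductSpace ℂ H]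
    (hdim : (3 : Cardinal) ≤ Module.rank ℂ H)
    (T : H →ₗ[ℂ] H) (hbij : Function.Bijective T)
    (horth : ∀ x y : H, (inner ℂ x y : ℂ) = 0 → (inner ℂ (T x) (T y) : ℂ) = 0) :
    ∃ c : ℝ, 0 < c ∧ ∀ x : H, ‖T x‖ = c * ‖x‖ := by
  obtain ⟨e, he, -, -⟩ := exists_norm_eq_inner_eq_zero_of_three_le_rank hdim (0 : H) 0 zero_le_one
  have he0 : e ≠ 0 := norm_ne_zero_iff.mp (he ▸ one_ne_zero)
  refine ⟨‖T e‖, norm_pos_iff.mpr (map_ne_zero_iff T hbij.injective |>.mpr he0), fun x => ?_⟩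
  have hscaled : ‖x‖ = ‖(‖x‖ : ℂ) • e‖ := by simp [norm_smul, he]
  rw [T.norm_map_eq_of_norm_eq_of_three_le_rank hdim horth hscaled, map_smul, norm_smul,
    Complex.norm_real, norm_norm, mul_comm]

/-- A bijective linear map on a complex Hilbert space of dimension at least `3` which
preserves orthogonality is a positive scalar multiple of a linear isometry. -/
theorem orthogonality_preserving_bijection_is_scalar_multiple_of_isometry
    {H : Type*} [NormedAddCommGroup H] [InnerProductSpace ℂ H] [CompleteSpace H]
    (hdim : (3 : Cardinal) ≤ Module.rank ℂ H)
    (T : H →ₗ[ℂ] H) (hbij : Function.Bijective T)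
    (horth : ∀ x y : H, (inner ℂ x y : ℂ) = 0 → (inner ℂ (T x) (T y) : ℂ) = 0) :
    ∃ c : ℝ, 0 < c ∧ ∀ x : H, ‖T x‖ = c * ‖x‖ :=
  orthogonality_preserving_bijection_is_scalar_multiple_of_isometry_general hdim T hbij horth
end
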